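/- Let (J_1,…,J_m) be an elementary subarrangement of type λ with prepotential of first kind P_{J_λ}, and let I and L be distinguished elements of (J_1,…,J_m). For each h let u_h (respectively s_h) be the position, in the increasing ordering of J_h, of the unique element of J_h ∖ I (respectively of J_h ∖ L). Let T_I = (i_1,…,i_k) (respectively T_L = (l_1,…,l_k)) be the ordered k-tuple obtained by concatenating the increasing lists of I ∩ J_1, …, I ∩ J_m (respectively of L ∩ J_1, …, L ∩ J_m). Then d_{T_I} · d_{T_L} · ∂^{2k} P_{J_λ} / ∂z_{i_1} ⋯ ∂z_{i_k} ∂z_{l_1} ⋯ ∂z_{l_k} = ( ∏_{h=1}^m (−1)^{u_h + s_h} ) · ∏_{j∈J_λ} a_j (the iterated partial derivative being a constant, since P_{J_λ} is a polynomial of degree 2k). -/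

import Mathlib

open scoped BigOperators
open Classical

noncomputable section

namespace ArrPaper

variable {n k : ℕ}

/-! ## The model of `V = ⋀^k ℂ^J` -/

/-- The `k`-element subsets of `J = {1,…,n}`. -/
abbrev KSub (n k : ℕ) := {s : Finset (Fin n) // s.card = k}

/-- The model of `V = ⋀^k(ℂ^J)`: coordinates with respect to the standard basis
`(e_I)`, `I` a `k`-element subset of `J`. -/
abbrev V (n k : ℕ) := KSub n k → ℂ

/-- The wedge product of `k` vectors of `ℂ^n` as an element of `V`:
its coordinate at a `k`-subset `I` is the determinant of the values of the vectors at the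
elements of `I` listed in increasing order. -/
def wedgek (v : Fin k → Fin n → ℂ) : V n k :=
  fun I => Matrix.det (Matrix.of fun (l l' : Fin k) => v l (I.1.orderIsoOfFin I.2 l').1)

/-- `e_T = e_{i_1} ∧ ⋯ ∧ e_{i_k}` for an ordered `k`-tuple `T = (i_1,…,i_k)`. -/
def eT (T : Fin k → Fin n) : V n k :=
  wedgek (fun l => Pi.single (T l) (1 : ℂ))

/-- A subset `S ⊆ J` is independent if the vectors `(b_j)_{j∈S}` are linearly
independent. -/
def Indep (b : Fin n → Fin k → ℂ) (S : Finset (Fin n)) : Prop :=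
  LinearIndependent ℂ (fun j : S => b j)

/-- A circuit: a dependent set all of whose proper subsets are independent. -/
def Circuit (b : Fin n → Fin k → ℂ) (S : Finset (Fin n)) : Prop :=
  ¬ Indep b S ∧ ∀ S' ⊂ S, Indep b S'

/-- The projection `ρ : V → V`, `ρ(e_I) = e_I` for `I` independent, `ρ(e_I) = 0` for
`I` dependent. -/
def rho (b : Fin n → Fin k → ℂ) (u : V n k) : V n k :=
  fun I => if Indep b I.1 then u I else 0

/-- The contravariant form
`S_a(u,v) = ∑_{I independent} (∏_{i∈I} a_i) u_I v_I`. -/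
def Sform (b : Fin n → Fin k → ℂ) (a : Fin n → ℂ) (u v : V n k) : ℂ :=
  ∑ I : KSub n k, if Indep b I.1 then (∏ i ∈ I.1, a i) * u I * v I else 0

/-- The `k`-tuple `(j, i_1, …, i_{k−1})` where `(i_1,…,i_{k−1})` lists `I'`
in increasing order. -/
def consTuple (hk : 0 < k) (j : Fin n) (I' : Finset (Fin n)) (hI' : I'.card = k - 1) :
    Fin k → Fin n :=
  fun l => if hl : (l : ℕ) = 0 then j
    else (I'.orderIsoOfFin hI' ⟨(l : ℕ) - 1, by have := l.isLt; omega⟩).1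

/-- `D_{I'} = ρ(∑_{j∈J} e_j ∧ e_{i_1} ∧ ⋯ ∧ e_{i_{k−1}})` for a `(k−1)`-subset
`I' = {i_1 < … < i_{k−1}}`. -/
def Delem (b : Fin n → Fin k → ℂ) (hk : 0 < k)
    (I' : Finset (Fin n)) (hI' : I'.card = k - 1) : V n k :=
  rho b (∑ j : Fin n, eT (consTuple hk j I' hI'))

/-- The space of singular vectors:
`Sing_a = {v ∈ range ρ | S_a(D_{I'}, v) = 0 for all independent (k−1)-subsets I'}`. -/
def SingA (b : Fin n → Fin k → ℂ) (a : Fin n → ℂ) (hk : 0 < k) : Set (V n k) :=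
  {v | (∃ u, rho b u = v) ∧
    ∀ (I' : Finset (Fin n)) (hI' : I'.card = k - 1), Indep b I' →
      Sform b a (Delem b hk I' hI') v = 0}

/-- The span of the elements `D_{I'}`, `I'` independent `(k−1)`-subsets. -/
def Dspan (b : Fin n → Fin k → ℂ) (hk : 0 < k) : Submodule ℂ (V n k) :=
  Submodule.span ℂ {w | ∃ (I' : Finset (Fin n)) (hI' : I'.card = k - 1),
    Indep b I' ∧ w = Delem b hk I' hI'}

/-- Hypothesis (H1): the restriction of `S_a` to `span{D_{I'}}` is nondegenerate. -/
def H1 (b : Fin n → Fin k → ℂ) (a : Fin n → ℂ) (hk : 0 < k) : Prop :=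
  ∀ w ∈ Dspan b hk, (∀ w' ∈ Dspan b hk, Sform b a w w' = 0) → w = 0

/-- `π` is the `S_a`-orthogonal projection of `range ρ` onto `Sing_a` (along
`span{D_{I'}}`), extended to `V` by `π(v) = π(ρ(v))`. -/
def IsProj (b : Fin n → Fin k → ℂ) (a : Fin n → ℂ) (hk : 0 < k)
    (π : V n k →ₗ[ℂ] V n k) : Prop :=
  ∀ v, π v ∈ SingA b a hk ∧ rho b v - π v ∈ Dspan b hk

/-! ## Elementary subarrangements -/

/-- An elementary subarrangement of type `λ = (λ_1,…,λ_m)` of the arrangement with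
normals `b`: pairwise disjoint subsets `J_1,…,J_m ⊆ J` with `|J_h| = λ_h + 1`,
`dim span{b_j : j ∈ J_1 ∪ ⋯ ∪ J_h} = λ_1 + ⋯ + λ_h`, and the same after deleting any
single `j ∈ J_h` from `J_1 ∪ ⋯ ∪ J_h`. -/
structure Elementary (n k : ℕ) (b : Fin n → Fin k → ℂ) where
  m : ℕ
  lam : Fin m → ℕ
  Jset : Fin m → Finset (Fin n)
  lam_pos : ∀ h, 0 < lam h
  lam_sum : ∑ h, lam h = k
  disj : ∀ h h', h ≠ h' → Disjoint (Jset h) (Jset h')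
  card_eq : ∀ h, (Jset h).card = lam h + 1
  rank_eq : ∀ h, Module.finrank ℂ
      (Submodule.span ℂ (b '' {j | ∃ h' ≤ h, j ∈ Jset h'}))
      = ∑ h' ∈ Finset.univ.filter (fun h' => h' ≤ h), lam h'
  rank_erase : ∀ h, ∀ j ∈ Jset h, Module.finrank ℂ
      (Submodule.span ℂ (b '' ({j' | ∃ h' ≤ h, j' ∈ Jset h'} \ {j})))
      = ∑ h' ∈ Finset.univ.filter (fun h' => h' ≤ h), lam h'

variable {b : Fin n → Fin k → ℂ}

/-- The `i`-th element (in increasing order) of `J_h`. -/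
def Elementary.elt (A : Elementary n k b) (h : Fin A.m) (i : Fin (A.lam h + 1)) :
    Fin n :=
  ((A.Jset h).orderIsoOfFin (A.card_eq h) i).1

lemma Elementary.elt_mem (A : Elementary n k b) (h : Fin A.m) (i : Fin (A.lam h + 1)) :
    A.elt h i ∈ A.Jset h :=
  ((A.Jset h).orderIsoOfFin (A.card_eq h) i).2

lemma Elementary.card_erase (A : Elementary n k b) (h : Fin A.m)
    (i : Fin (A.lam h + 1)) :
    ((A.Jset h).erase (A.elt h i)).card = A.lam h := by
  rw [Finset.card_erase_of_mem (A.elt_mem h i), A.card_eq]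
  omega

/-- The `λ_h`-tuple listing `J_h ∖ {j_i^h}` in increasing order. -/
def Elementary.omit (A : Elementary n k b) (h : Fin A.m) (i : Fin (A.lam h + 1))
    (l : Fin (A.lam h)) : Fin n :=
  (((A.Jset h).erase (A.elt h i)).orderIsoOfFin (A.card_erase h i) l).1

lemma concatLen {α : Type*} {m k : ℕ} (lam : Fin m → ℕ) (hsum : ∑ h, lam h = k)
    (f : (h : Fin m) → Fin (lam h) → α) :
    ((List.finRange m).flatMap fun h => List.ofFn (f h)).length = k := by
  rw [List.length_flatMap]
  simp only [List.map_map, Function.comp_def, List.length_ofFn]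
  rw [← Fin.sum_univ_def]
  exact hsum

/-- The concatenation of the tuples `f h : Fin (lam h) → α`, `h = 0, …, m−1`, in
order, as a single `k`-tuple. -/
def concatTuple {α : Type*} {m k : ℕ} (lam : Fin m → ℕ) (hsum : ∑ h, lam h = k)
    (f : (h : Fin m) → Fin (lam h) → α) : Fin k → α :=
  fun l => ((List.finRange m).flatMap fun h => List.ofFn (f h)).get
    (Fin.cast (concatLen lam hsum f).symm l)

/-- `λ^{h−1} + i` as an element of `Fin k`: the position of the `i`-th slot of the
`h`-th block in the concatenation. -/
def blockIdx {m k : ℕ} (lam : Fin m → ℕ) (hsum : ∑ h, lam h = k)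
    (h : Fin m) (i : Fin (lam h)) : Fin k :=
  ⟨(∑ h' ∈ Finset.univ.filter (fun h' => h' < h), lam h') + (i : ℕ), by
    have h1 : (∑ h' ∈ Finset.univ.filter (fun h' => h' < h), lam h') + lam h
        ≤ ∑ h', lam h' := by
      have hins : h ∉ Finset.univ.filter (fun h' => h' < h) := by simp
      calc (∑ h' ∈ Finset.univ.filter (fun h' => h' < h), lam h') + lam h
          = ∑ h' ∈ insert h (Finset.univ.filter (fun h' => h' < h)), lam h' := by
            rw [Finset.sum_insert hins]; ring
        _ ≤ ∑ h', lam h' := Finset.sum_le_sum_of_subset (Finset.subset_univ _)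
    have h2 := i.isLt
    omega⟩

/-- The singular element `s(J_1,…,J_m) = σ_1 ∧ ⋯ ∧ σ_m`, expanded by multilinearity:
`σ_h = ∑_i (−1)^{i+1} a_{j_i^h} (wedge of J_h ∖ {j_i^h} in increasing order)`
(zero-based signs). -/
def Elementary.sElem (A : Elementary n k b) (a : Fin n → ℂ) : V n k :=
  ∑ t : (h : Fin A.m) → Fin (A.lam h + 1),
    (∏ h, (-1 : ℂ) ^ (t h : ℕ) * a (A.elt h (t h))) •
      eT (concatTuple A.lam A.lam_sum (fun h => A.omit h (t h)))

/-- `J_λ = J_1 ∪ ⋯ ∪ J_m`. -/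
def Elementary.JLam (A : Elementary n k b) : Finset (Fin n) :=
  Finset.univ.biUnion A.Jset

/-- A `k`-subset `I ⊆ J` is a distinguished element of `(J_1,…,J_m)` if `I ⊆ J_λ`
and `|I ∩ J_h| = λ_h` for all `h`. -/
def Elementary.Distinguished (A : Elementary n k b) (I : Finset (Fin n)) : Prop :=
  I.card = k ∧ I ⊆ A.JLam ∧ ∀ h, (I ∩ A.Jset h).card = A.lam h

/-- `X_h^* = span{b_j : j ∈ J_1 ∪ ⋯ ∪ J_h}`. -/
def Elementary.Xstar (A : Elementary n k b) (h : Fin A.m) :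
    Submodule ℂ (Fin k → ℂ) :=
  Submodule.span ℂ (b '' {j | ∃ h' ≤ h, j ∈ A.Jset h'})

/-- `a(J_λ, J, h) = ∑_{j ∈ J, b_j ∉ X_h^*} a_j`. -/
def Elementary.awt (A : Elementary n k b) (a : Fin n → ℂ) (h : Fin A.m) : ℂ :=
  ∑ j : Fin n, if b j ∈ A.Xstar h then 0 else a j

/-- `a_J = ∑_{j∈J} a_j`. -/
def aJ (n : ℕ) (a : Fin n → ℂ) : ℂ := ∑ j : Fin n, a j

/-- `a(J_λ, J) = a_J ∏_{h=1}^{m−1} a(J_λ, J, h)`. -/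
def Elementary.aW (A : Elementary n k b) (a : Fin n → ℂ) : ℂ :=
  aJ n a * ∏ h ∈ Finset.univ.filter (fun h : Fin A.m => (h : ℕ) + 1 < A.m), A.awt a h

/-- Hypothesis (H2): `a(J_λ, J) ≠ 0` for every elementary subarrangement. -/
def H2 (b : Fin n → Fin k → ℂ) (a : Fin n → ℂ) : Prop :=
  ∀ A : Elementary n k b, A.aW a ≠ 0

/-- The coefficient of `e_T` in `w`, for an ordered tuple `T` with underlying set
`I` (of cardinality `k`): since `e_T = ±e_I`, it equals `e_T(I) ⋅ w(I)`. -/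
def coeffAt (T : Fin k → Fin n) (I : KSub n k) (w : V n k) : ℂ :=
  eT T I * w I

end ArrPaper

namespace ArrPaper

variable {n k : ℕ} {b : Fin n → Fin k → ℂ}

/-- The block determinant `D_{i,h} = d_{(j_1^h,…,ĵ_i^h,…,j_{λ_h+1}^h);h}`, computed in
the adapted coordinates `cC`: its `(r,ℓ)` entry is the coordinate of `b` at the
`ℓ`-th element of `J_h ∖ {j_i^h}` with respect to the basis vector number
`λ^{h−1} + r`. -/
def Elementary.DD (A : Elementary n k b) (cC : Fin n → Fin k → ℂ)
    (h : Fin A.m) (i : Fin (A.lam h + 1)) : ℂ :=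
  Matrix.det (Matrix.of fun (r l : Fin (A.lam h)) =>
    cC (A.omit h i l) (blockIdx A.lam A.lam_sum h r))

/-- The linear form `f_{J_λ,h}`, as a polynomial in `z_1,…,z_n`. -/
def Elementary.fpol (A : Elementary n k b) (cC : Fin n → Fin k → ℂ)
    (eN : Fin A.m → Fin n → ℂ) (h : Fin A.m) : MvPolynomial (Fin n) ℂ :=
  (∑ i : Fin (A.lam h + 1),
      MvPolynomial.C ((-1 : ℂ) ^ (i : ℕ) * A.DD cC h i) * MvPolynomial.X (A.elt h i))
    + ∑ j : Fin n, MvPolynomial.C (eN h j) * MvPolynomial.X j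

/-- The prepotential of first kind
`P_{J_λ} = ∏_h (∏_{j∈J_h} a_j) f_{J_λ,h}^{2λ_h} / ((2λ_h)! (∏_i D_{i,h})²)`. -/
def Elementary.prepot (A : Elementary n k b) (a : Fin n → ℂ)
    (cC : Fin n → Fin k → ℂ) (eN : Fin A.m → Fin n → ℂ) : MvPolynomial (Fin n) ℂ :=
  ∏ h : Fin A.m,
    MvPolynomial.C ((∏ j ∈ A.Jset h, a j) *
        ((Nat.factorial (2 * A.lam h) : ℂ) * (∏ i, A.DD cC h i) ^ 2)⁻¹) *
      (A.fpol cC eN h) ^ (2 * A.lam h)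

/-- Admissibility of the choices `(sB, cC, eN)` for an elementary subarrangement:
`sB` is a unimodular basis adapted to the filtration `X_1^* ⊆ ⋯ ⊆ X_m^*`, `cC` gives
the coordinates of the `b_j` in this basis, and `eN h` gives the coefficients `e_j`
(supported on `J_1 ∪ ⋯ ∪ J_{h−1}`) completing the linear relation defining
`f_{J_λ,h}`. -/
def Elementary.ChoiceOK (A : Elementary n k b)
    (sB : Fin k → Fin k → ℂ) (cC : Fin n → Fin k → ℂ)
    (eN : Fin A.m → Fin n → ℂ) : Prop :=
  Matrix.det (Matrix.of fun (i l : Fin k) => sB l i) = 1 ∧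
  (∀ j, b j = ∑ i : Fin k, cC j i • sB i) ∧
  (∀ h : Fin A.m, Submodule.span ℂ
      {v : Fin k → ℂ | ∃ i : Fin k,
        (i : ℕ) < ∑ h' ∈ Finset.univ.filter (fun h' => h' ≤ h), A.lam h' ∧ v = sB i}
    = A.Xstar h) ∧
  (∀ h j, eN h j ≠ 0 → ∃ h' < h, j ∈ A.Jset h') ∧
  (∀ h : Fin A.m,
    (∑ i : Fin (A.lam h + 1), ((-1 : ℂ) ^ (i : ℕ) * A.DD cC h i) • b (A.elt h i))
      + ∑ j : Fin n, eN h j • b j = 0)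

/-- Iterated formal partial derivative along a list of variables. -/
def pderivList (L : List (Fin n)) (p : MvPolynomial (Fin n) ℂ) :
    MvPolynomial (Fin n) ℂ :=
  L.foldl (fun q r => MvPolynomial.pderiv r q) p

/-- `d_T`: determinant of the matrix whose `ℓ`-th column is `b (T ℓ)`. -/
def dtup (b : Fin n → Fin k → ℂ) (T : Fin k → Fin n) : ℂ :=
  Matrix.det (Matrix.of fun (r l : Fin k) => b (T l) r)

/-- The potential of first kind: the (finite) sum over all elementary subarrangements
of `(1/a(J_λ,J)) P_{J_λ}`, with the choices in the definition of the prepotentials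
fixed once for each elementary subarrangement. -/
def Potential1 (b : Fin n → Fin k → ℂ) (a : Fin n → ℂ)
    (cC : Elementary n k b → Fin n → Fin k → ℂ)
    (eN : (A : Elementary n k b) → Fin A.m → Fin n → ℂ) : MvPolynomial (Fin n) ℂ :=
  ∑ᶠ A : Elementary n k b, MvPolynomial.C (A.aW a)⁻¹ * A.prepot a (cC A) (eN A)

end ArrPaper

open ArrPaper

namespace ArrPaper

/-- For a distinguished element `I` of `(J_1,…,J_m)`, the ordered `k`-tuple obtained by
concatenating the increasing lists of `I ∩ J_1, …, I ∩ J_m`. -/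
def Elementary.concatI {n k : ℕ} {b : Fin n → Fin k → ℂ} (A : Elementary n k b)
    (I : Finset (Fin n)) (hcard : ∀ h, (I ∩ A.Jset h).card = A.lam h) :
    Fin k → Fin n :=
  concatTuple A.lam A.lam_sum
    (fun h l => ((I ∩ A.Jset h).orderIsoOfFin (hcard h) l).1)

end ArrPaper

/-!
Differentiate `P_{J_λ} = c ∏_h f_{J_λ,h}^{2λ_h}` along the variables of `T_I` and `T_L`. Those
of the `h`-th block lie in `J_h`, which `f_{J_λ,h'}` does not involve for `h' < h`; treating
the blocks from the last to the first, each power `f_{J_λ,h}^{2λ_h}` is therefore hit by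
exactly its own `2λ_h` derivatives and becomes `(2λ_h)!` times the product of its
coefficients `(−1)^{i+1} D_{i,h}` over `I ∩ J_h` and over `L ∩ J_h`. In a basis adapted to
the flag `X_1^* ⊆ ⋯ ⊆ X_m^*` the matrix of `d_{T_I}` is block upper triangular with diagonal
blocks of determinant `D_{u_h,h}`, so `d_{T_I} = ∏_h D_{u_h,h}`. The rank conditions make all
`D_{i,h}` nonzero, and in each block
`D_{u,h} D_{s,h} ∏_{i≠u} (−1)^{i+1} D_{i,h} ∏_{i≠s} (−1)^{i+1} D_{i,h} = (−1)^{u+s} (∏_i D_{i,h})²`.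
-/

open MvPolynomial

lemma MvPolynomial.pderiv_pderiv_comm {σ R : Type*} [CommSemiring R] (i j : σ)
    (p : MvPolynomial σ R) : pderiv i (pderiv j p) = pderiv j (pderiv i p) := by
  by_cases hij : i = j
  · rw [hij]
  induction p using MvPolynomial.induction_on' with
  | add p q hp hq => simp only [map_add, hp, hq]
  | monomial s a =>
    simp only [pderiv_monomial]
    have hsub : s - Finsupp.single j 1 - Finsupp.single i 1
        = s - Finsupp.single i 1 - Finsupp.single j 1 := by
      ext t
      simp only [Finsupp.tsub_apply, Finsupp.single_apply]
      omega
    have hi : (s - Finsupp.single j 1 : σ →₀ ℕ) i = s i := by simp [Ne.symm hij]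
    have hj : (s - Finsupp.single i 1 : σ →₀ ℕ) j = s j := by simp [hij]
    rw [hsub, hi, hj, mul_right_comm]

lemma Fin.forall_not_lt_or_exists_lt_iff_le {m : ℕ} (h : Fin m) :
    (∀ x : Fin m, ¬ x < h) ∨ ∃ p : Fin m, ∀ x, x < h ↔ x ≤ p := by
  rcases h with ⟨_ | p, hp⟩
  · exact Or.inl fun x => by simp [Fin.lt_def]
  · exact Or.inr ⟨⟨p, by omega⟩, fun x => by simp only [Fin.lt_def, Fin.le_def]; omega⟩

lemma Fin.sum_filter_le_eq_sum_filter_lt_add {m : ℕ} {M : Type*} [AddCommMonoid M]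
    (f : Fin m → M) (h : Fin m) :
    ∑ x ∈ Finset.univ.filter (· ≤ h), f x
      = ∑ x ∈ Finset.univ.filter (· < h), f x + f h := by
  rw [Finset.filter_ge_eq_Iic, Finset.filter_gt_eq_Iio, ← Finset.Iio_insert,
    Finset.sum_insert Finset.notMem_Iio_self, add_comm]

lemma Finset.orderIsoOfFin_congr {α : Type*} [LinearOrder α] {s t : Finset α} (hst : s = t)
    {c : ℕ} (hs : s.card = c) (ht : t.card = c) (i : Fin c) :
    (s.orderIsoOfFin hs i : α) = t.orderIsoOfFin ht i := by
  subst hst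
  rfl

lemma List.getElem_flatMap_sum_take {α β : Type*} (g : β → List α) (l : List β) {t : ℕ}
    (ht : t < l.length) {r : ℕ} (hr : r < (g l[t]).length)
    (hq : ((l.take t).map fun x => (g x).length).sum + r < (l.flatMap g).length) :
    (l.flatMap g)[((l.take t).map fun x => (g x).length).sum + r] = (g l[t])[r] := by
  have hsplit : l.flatMap g = (l.take t).flatMap g ++ (g l[t] ++ (l.drop (t + 1)).flatMap g) := by
    rw [← List.flatMap_cons, ← List.drop_eq_getElem_cons ht, ← List.flatMap_append,
      List.take_append_drop]
  have hlen : ((l.take t).flatMap g).length = ((l.take t).map fun x => (g x).length).sum := by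
    simp [List.length_flatMap]
  simp only [hsplit]
  rw [List.getElem_append_right (by omega), List.getElem_append_left (by omega)]
  simp [hlen]

lemma LinearIndependent.coord_eq_zero_of_mem_span_image {ι R M : Type*} [Fintype ι] [Ring R]
    [AddCommGroup M] [Module R M] {v : ι → M} (hv : LinearIndependent R v) {c : ι → R}
    {s : Set ι} (hc : ∑ i, c i • v i ∈ Submodule.span R (v '' s)) {i : ι} (hi : i ∉ s) :
    c i = 0 := by
  obtain ⟨l, hls, hl⟩ := (Finsupp.mem_span_image_iff_linearCombination R).mp hc
  rw [Finsupp.linearCombination_apply, Finsupp.sum_fintype _ _ (by simp)] at hl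
  rw [hv.eq_coords_of_eq hl.symm i]
  exact Finsupp.notMem_support_iff.mp fun hmem => hi (hls hmem)

/-- By the dimension formula the hypothesis forces `W ⊓ span (range w) = ⊥` and `w` to be
linearly independent. -/
lemma eq_zero_of_sum_smul_mem_of_finrank_le {ι K V : Type*} [Fintype ι] [Field K]
    [AddCommGroup V] [Module K V] [FiniteDimensional K V] {W : Submodule K V} {w : ι → V}
    (hrank : Module.finrank K W + Fintype.card ι
      ≤ Module.finrank K ↥(W ⊔ Submodule.span K (Set.range w)))
    {x : ι → K} (hx : ∑ l, x l • w l ∈ W) : x = 0 := by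
  set U := Submodule.span K (Set.range w)
  have hsup := Submodule.finrank_sup_add_finrank_inf_eq W U
  have hU : Module.finrank K U ≤ Fintype.card ι := finrank_range_le_card w
  have hind : LinearIndependent K w :=
    linearIndependent_iff_card_eq_finrank_span.mpr (by change _ = Module.finrank K U; omega)
  have hinf : W ⊓ U = ⊥ := Submodule.finrank_eq_zero.mp (by omega)
  have hzero : ∑ l, x l • w l = 0 := by
    rw [← Submodule.mem_bot K, ← hinf]
    exact ⟨hx, Submodule.sum_mem _ fun l _ =>
      Submodule.smul_mem _ _ (Submodule.subset_span ⟨l, rfl⟩)⟩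
  exact funext (Fintype.linearIndependent_iff.mp hind x hzero)

lemma mul_prod_erase_neg_one_pow_mul {R : Type*} [CommRing R] {c : ℕ} (D : Fin c → R)
    (t : Fin c) :
    D t * ∏ i ∈ Finset.univ.erase t, ((-1) ^ (i : ℕ) * D i)
      = (-1) ^ (t : ℕ) * ∏ i : Fin c, ((-1) ^ (i : ℕ) * D i) := by
  rw [← Finset.mul_prod_erase _ _ (Finset.mem_univ t), ← mul_assoc, ← mul_assoc,
    ← pow_add, ← two_mul, pow_mul, neg_one_sq, one_pow, one_mul]

lemma sq_prod_neg_one_pow_mul {R : Type*} [CommRing R] {c : ℕ} (D : Fin c → R) :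
    (∏ i : Fin c, ((-1) ^ (i : ℕ) * D i)) ^ 2 = (∏ i, D i) ^ 2 := by
  simp_rw [← Finset.prod_pow, mul_pow, ← pow_mul, mul_comm _ 2, pow_mul, neg_one_sq, one_pow,
    one_mul]

lemma mul_mul_inv_mul_prod_erase_eq {K : Type*} [Field K] [CharZero K] {c : ℕ} (D : Fin c → K)
    (hD : ∀ i, D i ≠ 0) (u s : Fin c) (α : K) (N : ℕ) :
    D u * D s * (α * ((N.factorial : K) * (∏ i, D i) ^ 2)⁻¹ *
      (N.factorial * ((∏ i ∈ Finset.univ.erase u, ((-1) ^ (i : ℕ) * D i)) *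
        ∏ i ∈ Finset.univ.erase s, ((-1) ^ (i : ℕ) * D i))))
      = (-1) ^ ((u : ℕ) + s) * α := by
  have hprod : (∏ i, D i) ≠ 0 := Finset.prod_ne_zero_iff.mpr fun i _ => hD i
  have hfac : (N.factorial : K) ≠ 0 := Nat.cast_ne_zero.mpr N.factorial_ne_zero
  calc _ = (D u * ∏ i ∈ Finset.univ.erase u, ((-1) ^ (i : ℕ) * D i)) *
        (D s * ∏ i ∈ Finset.univ.erase s, ((-1) ^ (i : ℕ) * D i)) * α *
        ((N.factorial : K) * ((N.factorial : K) * (∏ i, D i) ^ 2)⁻¹) := by ring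
    _ = (-1) ^ ((u : ℕ) + s) * α := by
      rw [mul_prod_erase_neg_one_pow_mul, mul_prod_erase_neg_one_pow_mul, pow_add]
      field_simp
      rw [sq_prod_neg_one_pow_mul]
      ring

namespace ArrPaper

variable {n : ℕ}

def linearForm (φ : Fin n → ℂ) : MvPolynomial (Fin n) ℂ := ∑ j, C (φ j) * X j

lemma pderiv_linearForm (φ : Fin n → ℂ) (r : Fin n) : pderiv r (linearForm φ) = C (φ r) := by
  simp [linearForm, pderiv_X, Pi.single_apply]

lemma pderivList_cons (r : Fin n) (L : List (Fin n)) (p : MvPolynomial (Fin n) ℂ) :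
    pderivList (r :: L) p = pderivList L (pderiv r p) := rfl

lemma pderivList_append (L L' : List (Fin n)) (p : MvPolynomial (Fin n) ℂ) :
    pderivList (L ++ L') p = pderivList L' (pderivList L p) :=
  List.foldl_append ..

lemma pderivList_C_mul (c : ℂ) (L : List (Fin n)) (p : MvPolynomial (Fin n) ℂ) :
    pderivList L (C c * p) = C c * pderivList L p := by
  induction L generalizing p with
  | nil => rfl
  | cons r L ih => rw [pderivList_cons, pderivList_cons, pderiv_C_mul, ih]

instance : RightCommutative fun (q : MvPolynomial (Fin n) ℂ) (r : Fin n) => pderiv r q :=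
  ⟨fun q r r' => pderiv_pderiv_comm r' r q⟩

lemma pderivList_perm {L L' : List (Fin n)} (hL : L.Perm L') (p : MvPolynomial (Fin n) ℂ) :
    pderivList L p = pderivList L' p :=
  hL.foldl_eq p

lemma pderivList_mul_linearForm_pow (φ : Fin n → ℂ) (L : List (Fin n))
    {q : MvPolynomial (Fin n) ℂ} (hq : ∀ r ∈ L, pderiv r q = 0) :
    pderivList L (q * linearForm φ ^ L.length)
      = C (L.length.factorial * (L.map φ).prod) * q := by
  induction L generalizing q with
  | nil => simp [pderivList]
  | cons r L ih =>
    have hstep : pderiv r (q * linearForm φ ^ (L.length + 1))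
        = C ((L.length + 1 : ℕ) * φ r) * (q * linearForm φ ^ L.length) := by
      rw [pderiv_mul, hq r List.mem_cons_self, pderiv_pow, pderiv_linearForm]
      simp only [zero_mul, zero_add, Nat.add_sub_cancel, C_mul, map_natCast]
      ring
    rw [pderivList_cons, List.length_cons, hstep, pderivList_C_mul,
      ih fun r' hr' => hq r' (List.mem_cons_of_mem _ hr'), ← mul_assoc, ← C_mul]
    simp only [List.map_cons, List.prod_cons, Nat.factorial_succ]
    push_cast
    ring_nf

/-- Differentiating the blocks from the last to the first, each block of derivatives only sees
its own form. -/
lemma pderivList_mul_prod_linearForm_pow {m : ℕ} (φ : Fin m → Fin n → ℂ)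
    (Bl : Fin m → List (Fin n)) (hφ : ∀ h h', h < h' → ∀ r ∈ Bl h', φ h r = 0)
    {q : MvPolynomial (Fin n) ℂ} (hq : ∀ h, ∀ r ∈ Bl h, pderiv r q = 0) :
    pderivList ((List.finRange m).reverse.flatMap Bl)
        (q * ∏ h, linearForm (φ h) ^ (Bl h).length)
      = C (∏ h, ((Bl h).length.factorial * ((Bl h).map (φ h)).prod)) * q := by
  induction m generalizing q with
  | zero => simp [pderivList]
  | succ m ih =>
    have hlist : (List.finRange (m + 1)).reverse.flatMap Bl
        = ((List.finRange m).reverse.flatMap fun h => Bl h.succ) ++ Bl 0 := by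
      rw [List.finRange_succ, List.reverse_cons, List.flatMap_append, ← List.map_reverse,
        List.flatMap_map]
      simp
    have hq' : ∀ h : Fin m, ∀ r ∈ Bl h.succ,
        pderiv r (q * linearForm (φ 0) ^ (Bl 0).length) = 0 := by
      intro h r hr
      rw [pderiv_mul, pderiv_pow, pderiv_linearForm, hq h.succ r hr,
        hφ 0 h.succ (Fin.succ_pos h) r hr]
      simp
    rw [hlist, pderivList_append, Fin.prod_univ_succ, ← mul_assoc,
      ih (fun h => φ h.succ) (fun h => Bl h.succ)
        (fun h h' hlt => hφ h.succ h'.succ (Fin.succ_lt_succ_iff.mpr hlt)) hq',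
      pderivList_C_mul, pderivList_mul_linearForm_pow (φ 0) (Bl 0) (hq 0),
      Fin.prod_univ_succ, ← mul_assoc, ← C_mul, mul_comm (∏ _, _)]

lemma blockIdx_val {m k : ℕ} (lam : Fin m → ℕ) (hs : ∑ h, lam h = k) (h : Fin m)
    (i : Fin (lam h)) :
    (blockIdx lam hs h i : ℕ) = (((List.finRange m).take h).map lam).sum + i := by
  rw [List.map_take, ← List.ofFn_eq_map, List.sum_take_ofFn]
  rfl
lemma concatTuple_blockIdx {α : Type*} {m k : ℕ} (lam : Fin m → ℕ) (hs : ∑ h, lam h = k)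
    (f : (h : Fin m) → Fin (lam h) → α) (h : Fin m) (i : Fin (lam h)) :
    concatTuple lam hs f (blockIdx lam hs h i) = f h i := by
  have hidx : (Fin.cast (concatLen lam hs f).symm (blockIdx lam hs h i) : ℕ)
      = (((List.finRange m).take h).map fun x => (List.ofFn (f x)).length).sum + i := by
    simp [blockIdx_val]
  simp only [concatTuple, List.get_eq_getElem, hidx]
  rw [List.getElem_flatMap_sum_take _ _ (by simp) (by simp), List.getElem_ofFn]
  have key : ∀ x (hx : x = h) (j : Fin (lam x)), (j : ℕ) = i → f x j = f h i := by
    rintro _ rfl j hj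
    rw [Fin.ext hj]
  exact key _ (by simp) _ rfl

lemma blockIdx_eq_finSigmaFinEquiv {m k : ℕ} (lam : Fin m → ℕ) (hs : ∑ h, lam h = k)
    (h : Fin m) (i : Fin (lam h)) :
    blockIdx lam hs h i = finCongr hs (finSigmaFinEquiv ⟨h, i⟩) := by
  ext
  simp only [blockIdx, finCongr_apply, Fin.val_cast, finSigmaFinEquiv_apply]
  congr 1
  exact Finset.sum_bij' (fun x hx => ⟨x, (Finset.mem_filter.mp hx).2⟩)
    (fun i _ => Fin.castLE h.2.le i) (by simp)
    (fun i _ => Finset.mem_filter.mpr ⟨Finset.mem_univ _, i.2⟩)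
    (fun _ _ => rfl) (fun _ _ => rfl) (fun _ _ => rfl)


lemma det_concatTuple_of_blockTriangular {m k : ℕ} (lam : Fin m → ℕ) (hs : ∑ h, lam h = k)
    (g : (h : Fin m) → Fin (lam h) → Fin n) (c : Fin n → Fin k → ℂ)
    (hc : ∀ x y, y < x → ∀ (r' : Fin (lam y)) (r : Fin (lam x)),
      c (g y r') (blockIdx lam hs x r) = 0) :
    Matrix.det (Matrix.of fun (i l : Fin k) => c (concatTuple lam hs g l) i)
      = ∏ h, Matrix.det
          (Matrix.of fun (r l : Fin (lam h)) => c (g h l) (blockIdx lam hs h r)) := by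
  set e : (Σ h, Fin (lam h)) ≃ Fin k := finSigmaFinEquiv.trans (finCongr hs)
  have he : ∀ x, e x = blockIdx lam hs x.1 x.2 := fun x => (blockIdx_eq_finSigmaFinEquiv ..).symm
  set N := (Matrix.of fun (i l : Fin k) => c (concatTuple lam hs g l) i).submatrix e e
  have hN : ∀ x y, N x y = c (g y.1 y.2) (blockIdx lam hs x.1 x.2) := fun x y => by
    simp only [N, Matrix.submatrix_apply, Matrix.of_apply, he, concatTuple_blockIdx]
  have htri : N.BlockTriangular Sigma.fst := fun x y hlt => by rw [hN]; exact hc _ _ hlt _ _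
  rw [← Matrix.det_submatrix_equiv_self e, htri.det_fintype]
  refine Finset.prod_congr rfl fun h _ => ?_
  rw [← Matrix.det_submatrix_equiv_self (Equiv.sigmaSubtype h).symm]
  congr 1
  ext r l
  exact hN ⟨h, r⟩ ⟨h, l⟩

lemma ofFn_concatTuple {α : Type*} {m k : ℕ} (lam : Fin m → ℕ) (hs : ∑ h, lam h = k)
    (f : (h : Fin m) → Fin (lam h) → α) :
    List.ofFn (concatTuple lam hs f) = (List.finRange m).flatMap fun h => List.ofFn (f h) :=
  List.ext_getElem (by simpa using (concatLen lam hs f).symm) fun _ _ _ => List.getElem_ofFn ..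


variable {k : ℕ} {b : Fin n → Fin k → ℂ}

namespace Elementary

variable (A : Elementary n k b)

/-- `X_{h−1}^*` (the zero space for the first block). -/
def Xlt (h : Fin A.m) : Submodule ℂ (Fin k → ℂ) :=
  Submodule.span ℂ (b '' {j | ∃ h' < h, j ∈ A.Jset h'})

lemma finrank_Xlt (h : Fin A.m) :
    Module.finrank ℂ (A.Xlt h) = ∑ x ∈ Finset.univ.filter (· < h), A.lam x := by
  rcases Fin.forall_not_lt_or_exists_lt_iff_le h with hnone | ⟨p, hp⟩
  · have hempty : {j | ∃ h' < h, j ∈ A.Jset h'} = ∅ := by simp [hnone]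
    rw [Xlt, hempty]
    simp [hnone]
  · have hset : {j | ∃ h' < h, j ∈ A.Jset h'} = {j | ∃ h' ≤ p, j ∈ A.Jset h'} := by
      simp only [hp]
    rw [Xlt, hset]
    simp only [hp]
    exact A.rank_eq p

lemma elt_injective (h : Fin A.m) : Function.Injective (A.elt h) := fun _ _ hij =>
  ((A.Jset h).orderIsoOfFin (A.card_eq h)).injective (Subtype.ext hij)

lemma omit_mem (h : Fin A.m) (i : Fin (A.lam h + 1)) (l : Fin (A.lam h)) :
    A.omit h i l ∈ A.Jset h :=
  Finset.mem_of_mem_erase (((A.Jset h).erase (A.elt h i)).orderIsoOfFin _ l).2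

lemma exists_omit_eq {h : Fin A.m} {i : Fin (A.lam h + 1)} {j : Fin n}
    (hj : j ∈ (A.Jset h).erase (A.elt h i)) : ∃ l, A.omit h i l = j :=
  ⟨(((A.Jset h).erase (A.elt h i)).orderIsoOfFin (A.card_erase h i)).symm ⟨j, hj⟩, by
    simp [Elementary.omit]⟩

lemma prod_omit {M : Type*} [CommMonoid M] (h : Fin A.m) (t : Fin (A.lam h + 1))
    (F : Fin n → M) : ∏ l, F (A.omit h t l) = ∏ i ∈ Finset.univ.erase t, F (A.elt h i) := by
  have himage : Finset.univ.image (A.elt h) = A.Jset h := by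
    ext j
    refine ⟨fun hj => ?_, fun hj => Finset.mem_image.mpr
      ⟨((A.Jset h).orderIsoOfFin (A.card_eq h)).symm ⟨j, hj⟩, Finset.mem_univ _,
        by simp [elt]⟩⟩
    obtain ⟨i, -, rfl⟩ := Finset.mem_image.mp hj
    exact A.elt_mem h i
  calc ∏ l, F (A.omit h t l) = ∏ j ∈ (A.Jset h).erase (A.elt h t), F j := by
        rw [← Finset.prod_coe_sort ((A.Jset h).erase (A.elt h t)) F]
        exact Fintype.prod_equiv (((A.Jset h).erase (A.elt h t)).orderIsoOfFin
          (A.card_erase h t)).toEquiv _ _ fun _ => rfl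
    _ = ∏ i ∈ Finset.univ.erase t, F (A.elt h i) := by
        rw [← himage, ← Finset.image_erase (A.elt_injective h),
          Finset.prod_image (A.elt_injective h).injOn]

lemma span_erase_le_Xlt_sup (h : Fin A.m) (i : Fin (A.lam h + 1)) :
    Submodule.span ℂ (b '' ({j | ∃ h' ≤ h, j ∈ A.Jset h'} \ {A.elt h i}))
      ≤ A.Xlt h ⊔ Submodule.span ℂ (Set.range fun l => b (A.omit h i l)) := by
  rw [Submodule.span_le]
  rintro _ ⟨j, ⟨⟨h', hh', hj⟩, hji⟩, rfl⟩
  rcases hh'.lt_or_eq with hlt | rfl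
  · exact Submodule.mem_sup_left (Submodule.subset_span ⟨j, ⟨h', hlt, hj⟩, rfl⟩)
  · obtain ⟨l, rfl⟩ := A.exists_omit_eq (Finset.mem_erase.mpr ⟨hji, hj⟩)
    exact Submodule.mem_sup_right (Submodule.subset_span ⟨l, rfl⟩)

lemma finrank_Xlt_add_le (h : Fin A.m) (i : Fin (A.lam h + 1)) :
    Module.finrank ℂ (A.Xlt h) + Fintype.card (Fin (A.lam h))
      ≤ Module.finrank ℂ
          ↥(A.Xlt h ⊔ Submodule.span ℂ (Set.range fun l => b (A.omit h i l))) := by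
  rw [A.finrank_Xlt, Fintype.card_fin, ← Fin.sum_filter_le_eq_sum_filter_lt_add,
    ← A.rank_erase h _ (A.elt_mem h i)]
  exact Submodule.finrank_mono (A.span_erase_le_Xlt_sup h i)

lemma concatI_eq_concatTuple_omit {M : Finset (Fin n)} (hM : ∀ h, (M ∩ A.Jset h).card = A.lam h)
    {t : (h : Fin A.m) → Fin (A.lam h + 1)} (hMt : ∀ h, A.Jset h \ M = {A.elt h (t h)}) :
    A.concatI M hM = concatTuple A.lam A.lam_sum fun h => A.omit h (t h) := by
  have hinter : ∀ h, M ∩ A.Jset h = (A.Jset h).erase (A.elt h (t h)) := fun h => by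
    rw [Finset.erase_eq, ← hMt h, Finset.sdiff_sdiff_self_left, Finset.inter_comm]
  unfold concatI
  congr
  funext h l
  exact Finset.orderIsoOfFin_congr (hinter h) _ _ l

def fcoeff (cC : Fin n → Fin k → ℂ) (eN : Fin A.m → Fin n → ℂ) (h : Fin A.m) (j : Fin n) :
    ℂ :=
  eN h j + ∑ i, if A.elt h i = j then (-1) ^ (i : ℕ) * A.DD cC h i else 0

lemma fpol_eq_linearForm (cC : Fin n → Fin k → ℂ) (eN : Fin A.m → Fin n → ℂ)
    (h : Fin A.m) :
    A.fpol cC eN h = linearForm (A.fcoeff cC eN h) := by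
  simp only [fpol, linearForm, fcoeff, C_add, add_mul, Finset.sum_add_distrib, map_sum,
    apply_ite C, map_zero, Finset.sum_mul, ite_mul, zero_mul]
  rw [add_comm, Finset.sum_comm]
  simp

variable {A} {sB : Fin k → Fin k → ℂ} {cC : Fin n → Fin k → ℂ}
  {eN : Fin A.m → Fin n → ℂ}

lemma ChoiceOK.linearIndependent (hch : A.ChoiceOK sB cC eN) : LinearIndependent ℂ sB :=
  (Matrix.linearIndependent_cols_iff_isUnit (A := Matrix.of fun i l => sB l i)).mpr
    ((Matrix.isUnit_iff_isUnit_det _).mpr (by rw [hch.1]; exact isUnit_one))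

lemma ChoiceOK.span_sB_le (hch : A.ChoiceOK sB cC eN) (h : Fin A.m) :
    Submodule.span ℂ (sB '' {i | (i : ℕ) < ∑ x ∈ Finset.univ.filter (· ≤ h), A.lam x})
      = A.Xstar h := by
  obtain ⟨-, -, hspan, -⟩ := hch
  rw [← hspan h]
  congr 1
  ext v
  simp [eq_comm]

lemma ChoiceOK.span_sB_lt (hch : A.ChoiceOK sB cC eN) (h : Fin A.m) :
    Submodule.span ℂ (sB '' {i | (i : ℕ) < ∑ x ∈ Finset.univ.filter (· < h), A.lam x})
      = A.Xlt h := by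
  rcases Fin.forall_not_lt_or_exists_lt_iff_le h with hnone | ⟨p, hp⟩
  · simp [Xlt, hnone]
  · simp only [Xlt, hp]
    exact hch.span_sB_le p

lemma ChoiceOK.coord_eq_zero (hch : A.ChoiceOK sB cC eN) {h : Fin A.m} {j : Fin n}
    (hj : j ∈ A.Jset h) {i : Fin k}
    (hi : ∑ x ∈ Finset.univ.filter (· ≤ h), A.lam x ≤ i) : cC j i = 0 := by
  refine hch.linearIndependent.coord_eq_zero_of_mem_span_image
    (s := {i : Fin k | (i : ℕ) < _}) ?_ (not_lt.mpr hi)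
  rw [← hch.2.1 j, hch.span_sB_le h]
  exact Submodule.subset_span ⟨j, ⟨h, le_rfl, hj⟩, rfl⟩

lemma ChoiceOK.sum_smul_omit_mem_Xlt (hch : A.ChoiceOK sB cC eN) {h : Fin A.m}
    {i : Fin (A.lam h + 1)} {x : Fin (A.lam h) → ℂ}
    (hx : (Matrix.of fun r l => cC (A.omit h i l) (blockIdx A.lam A.lam_sum h r)).mulVec x = 0) :
    ∑ l, x l • b (A.omit h i l) ∈ A.Xlt h := by
  set S := ∑ x ∈ Finset.univ.filter (· < h), A.lam x
  have hcoords : ∑ l, x l • b (A.omit h i l)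
      = ∑ i', (∑ l, x l * cC (A.omit h i l) i') • sB i' := by
    simp_rw [hch.2.1, Finset.smul_sum, smul_smul, Finset.sum_smul]
    exact Finset.sum_comm
  have hzero : ∀ i' : Fin k, S ≤ i' → ∑ l, x l * cC (A.omit h i l) i' = 0 := by
    intro i' hi'
    rcases lt_or_ge (i' : ℕ) (S + A.lam h) with hlt | hge
    · have hrow := congrFun hx ⟨i' - S, by omega⟩
      have hidx : blockIdx A.lam A.lam_sum h ⟨i' - S, by omega⟩ = i' :=
        Fin.ext (by simp only [blockIdx]; omega)
      simpa [Matrix.mulVec, dotProduct, hidx, mul_comm] using hrow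
    · refine Finset.sum_eq_zero fun l _ => ?_
      rw [hch.coord_eq_zero (A.omit_mem h i l)
        (by rwa [Fin.sum_filter_le_eq_sum_filter_lt_add]), mul_zero]
  rw [hcoords, ← hch.span_sB_lt]
  refine Submodule.sum_mem _ fun i' _ => ?_
  by_cases hi' : (i' : ℕ) < S
  · exact Submodule.smul_mem _ _ (Submodule.subset_span ⟨i', hi', rfl⟩)
  · rw [hzero i' (not_lt.mp hi'), zero_smul]
    exact Submodule.zero_mem _

/-- A kernel vector of the block matrix of `D_{i,h}` gives a relation among the `b_j`,
`j ∈ J_h ∖ {j_i^h}`, modulo `X_{h−1}^*`, which the rank condition `rank_erase` forbids. -/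
lemma ChoiceOK.DD_ne_zero (hch : A.ChoiceOK sB cC eN) (h : Fin A.m) (i : Fin (A.lam h + 1)) :
    A.DD cC h i ≠ 0 := fun hdet => by
  obtain ⟨x, hx0, hx⟩ := Matrix.exists_mulVec_eq_zero_iff.mpr hdet
  exact hx0 (eq_zero_of_sum_smul_mem_of_finrank_le (A.finrank_Xlt_add_le h i)
    (hch.sum_smul_omit_mem_Xlt hx))

lemma ChoiceOK.dtup_eq_det_coords (hch : A.ChoiceOK sB cC eN) (T : Fin k → Fin n) :
    dtup b T = Matrix.det (Matrix.of fun i l => cC (T l) i) := by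
  obtain ⟨hdet, hb, -⟩ := hch
  have hmul : (Matrix.of fun r l => b (T l) r)
      = Matrix.of (fun i l => sB l i) * Matrix.of fun i l => cC (T l) i := by
    ext r l
    simp [Matrix.mul_apply, hb, Finset.sum_apply, mul_comm]
  rw [dtup, hmul, Matrix.det_mul, hdet, one_mul]

lemma ChoiceOK.dtup_concatTuple_omit (hch : A.ChoiceOK sB cC eN)
    (t : (h : Fin A.m) → Fin (A.lam h + 1)) :
    dtup b (concatTuple A.lam A.lam_sum fun h => A.omit h (t h)) = ∏ h, A.DD cC h (t h) := by
  rw [hch.dtup_eq_det_coords, det_concatTuple_of_blockTriangular]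
  · rfl
  intro x y hyx r' r
  refine hch.coord_eq_zero (A.omit_mem y (t y) r') ?_
  calc ∑ z ∈ Finset.univ.filter (· ≤ y), A.lam z
      ≤ ∑ z ∈ Finset.univ.filter (· < x), A.lam z :=
        Finset.sum_le_sum_of_subset fun z hz => by
          simp only [Finset.mem_filter, Finset.mem_univ, true_and] at hz ⊢
          exact hz.trans_lt hyx
    _ ≤ blockIdx A.lam A.lam_sum x r := Nat.le_add_right _ _

lemma ChoiceOK.eN_eq_zero (hch : A.ChoiceOK sB cC eN) {h h' : Fin A.m} (hh : h ≤ h')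
    {j : Fin n} (hj : j ∈ A.Jset h') : eN h j = 0 := by
  obtain ⟨-, -, -, heN, -⟩ := hch
  by_contra hne
  obtain ⟨h'', hlt, hj''⟩ := heN h j hne
  exact Finset.disjoint_left.mp (A.disj h'' h' (hlt.trans_le hh).ne) hj'' hj

lemma ChoiceOK.fcoeff_elt (hch : A.ChoiceOK sB cC eN) (h : Fin A.m) (i : Fin (A.lam h + 1)) :
    A.fcoeff cC eN h (A.elt h i) = (-1) ^ (i : ℕ) * A.DD cC h i := by
  rw [fcoeff, hch.eN_eq_zero le_rfl (A.elt_mem h i), zero_add, Finset.sum_eq_single i]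
  · rw [if_pos rfl]
  · exact fun i' _ hne => if_neg fun heq => hne (A.elt_injective h heq)
  · simp

lemma ChoiceOK.fcoeff_eq_zero (hch : A.ChoiceOK sB cC eN) {h h' : Fin A.m} (hlt : h < h')
    {j : Fin n} (hj : j ∈ A.Jset h') : A.fcoeff cC eN h j = 0 := by
  rw [fcoeff, hch.eN_eq_zero hlt.le hj, zero_add]
  refine Finset.sum_eq_zero fun i _ => if_neg fun heq => ?_
  exact Finset.disjoint_left.mp (A.disj h h' hlt.ne) (A.elt_mem h i) (heq ▸ hj)

lemma ChoiceOK.pderivList_prepot (hch : A.ChoiceOK sB cC eN) (a : Fin n → ℂ)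
    (Bl : Fin A.m → List (Fin n)) (hBl : ∀ h, ∀ r ∈ Bl h, r ∈ A.Jset h)
    (hlen : ∀ h, (Bl h).length = 2 * A.lam h) {D : List (Fin n)}
    (hD : D.Perm ((List.finRange A.m).flatMap Bl)) :
    pderivList D (A.prepot a cC eN)
      = C (∏ h, (∏ j ∈ A.Jset h, a j) *
          (((2 * A.lam h).factorial : ℂ) * (∏ i, A.DD cC h i) ^ 2)⁻¹ *
          ((2 * A.lam h).factorial * ((Bl h).map (A.fcoeff cC eN h)).prod)) := by
  have hprepot : A.prepot a cC eN = C (∏ h, (∏ j ∈ A.Jset h, a j) *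
      (((2 * A.lam h).factorial : ℂ) * (∏ i, A.DD cC h i) ^ 2)⁻¹) *
      (1 * ∏ h, linearForm (A.fcoeff cC eN h) ^ (Bl h).length) := by
    rw [prepot, Finset.prod_mul_distrib, map_prod, one_mul]
    simp only [fpol_eq_linearForm, hlen]
  have hperm : D.Perm ((List.finRange A.m).reverse.flatMap Bl) :=
    hD.trans ((List.reverse_perm _).flatMap_right Bl).symm
  rw [hprepot, pderivList_perm hperm, pderivList_C_mul,
    pderivList_mul_prod_linearForm_pow _ Bl
      (fun h h' hlt r hr => hch.fcoeff_eq_zero hlt (hBl h' r hr)) (by simp),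
    mul_one, ← C_mul, ← Finset.prod_mul_distrib]
  simp only [hlen]

end Elementary

end ArrPaper

theorem stmt13_general (n k : ℕ)
    (b : Fin n → Fin k → ℂ)
    (a : Fin n → ℂ)
    (A : Elementary n k b)
    (sB : Fin k → Fin k → ℂ) (cC : Fin n → Fin k → ℂ)
    (eN : Fin A.m → Fin n → ℂ) (hch : A.ChoiceOK sB cC eN)
    (I L : Finset (Fin n))
    (hIc : ∀ h, (I ∩ A.Jset h).card = A.lam h)
    (hLc : ∀ h, (L ∩ A.Jset h).card = A.lam h)
    -- `u h`, `s h`: positions (in the increasing ordering of `J_h`) of the unique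
    -- elements of `J_h ∖ I` and `J_h ∖ L`
    (u s : (h : Fin A.m) → Fin (A.lam h + 1))
    (hu : ∀ h, A.Jset h \ I = {A.elt h (u h)})
    (hs : ∀ h, A.Jset h \ L = {A.elt h (s h)}) :
    MvPolynomial.C (dtup b (A.concatI I hIc) * dtup b (A.concatI L hLc)) *
        pderivList
          (List.ofFn (A.concatI I hIc) ++ List.ofFn (A.concatI L hLc))
          (A.prepot a cC eN)
      = MvPolynomial.C
          ((∏ h, (-1 : ℂ) ^ ((u h : ℕ) + (s h : ℕ))) * ∏ j ∈ A.JLam, a j) := by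
  set Bl := fun h => List.ofFn (A.omit h (u h)) ++ List.ofFn (A.omit h (s h))
  have hBl : ∀ h, ∀ r ∈ Bl h, r ∈ A.Jset h := by
    intro h r hr
    simp only [Bl, List.mem_append, List.mem_ofFn] at hr
    rcases hr with ⟨l, rfl⟩ | ⟨l, rfl⟩ <;> exact A.omit_mem _ _ l
  have hperm : (List.ofFn (concatTuple A.lam A.lam_sum fun h => A.omit h (u h)) ++
      List.ofFn (concatTuple A.lam A.lam_sum fun h => A.omit h (s h))).Perm
      ((List.finRange A.m).flatMap Bl) := by
    rw [ofFn_concatTuple, ofFn_concatTuple]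
    exact List.flatMap_append_perm _ _ _
  rw [A.concatI_eq_concatTuple_omit hIc hu, A.concatI_eq_concatTuple_omit hLc hs,
    hch.dtup_concatTuple_omit, hch.dtup_concatTuple_omit,
    hch.pderivList_prepot a Bl hBl (fun h => by simp [Bl]; ring) hperm, ← C_mul,
    ← Finset.prod_mul_distrib, ← Finset.prod_mul_distrib, Elementary.JLam,
    Finset.prod_biUnion fun h _ h' _ hne => A.disj h h' hne, ← Finset.prod_mul_distrib]
  refine congrArg C (Finset.prod_congr rfl fun h _ => ?_)
  simp only [Bl, List.map_append, List.prod_append, List.map_ofFn, List.prod_ofFn,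
    Function.comp_def, A.prod_omit, hch.fcoeff_elt]
  exact mul_mul_inv_mul_prod_erase_eq _ (hch.DD_ne_zero h) _ _ _ _

/-- **Formula (6.4) of the paper.** For distinguished elements `I`, `L` of an
elementary subarrangement `(J_1,…,J_m)`, the `2k`-th mixed partial derivative of the
prepotential of first kind along `T_I` and `T_L` satisfies
`d_{T_I} d_{T_L} ∂^{2k} P_{J_λ} = (∏_h (−1)^{u_h+s_h}) ∏_{j∈J_λ} a_j`. -/
theorem stmt13 (n k : ℕ) (hk : 0 < k) (hkn : k < n)
    (b : Fin n → Fin k → ℂ) (hb0 : ∀ j, b j ≠ 0)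
    (hbspan : Submodule.span ℂ (Set.range b) = ⊤)
    (a : Fin n → ℂ) (ha : ∀ j, a j ≠ 0)
    (A : Elementary n k b)
    (sB : Fin k → Fin k → ℂ) (cC : Fin n → Fin k → ℂ)
    (eN : Fin A.m → Fin n → ℂ) (hch : A.ChoiceOK sB cC eN)
    (I L : Finset (Fin n))
    (hI : A.Distinguished I) (hL : A.Distinguished L)
    (hIc : ∀ h, (I ∩ A.Jset h).card = A.lam h)
    (hLc : ∀ h, (L ∩ A.Jset h).card = A.lam h)
    -- `u h`, `s h`: positions (in the increasing ordering of `J_h`) of the unique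
    -- elements of `J_h ∖ I` and `J_h ∖ L`
    (u s : (h : Fin A.m) → Fin (A.lam h + 1))
    (hu : ∀ h, A.Jset h \ I = {A.elt h (u h)})
    (hs : ∀ h, A.Jset h \ L = {A.elt h (s h)}) :
    MvPolynomial.C (dtup b (A.concatI I hIc) * dtup b (A.concatI L hLc)) *
        pderivList
          (List.ofFn (A.concatI I hIc) ++ List.ofFn (A.concatI L hLc))
          (A.prepot a cC eN)
      = MvPolynomial.C
          ((∏ h, (-1 : ℂ) ^ ((u h : ℕ) + (s h : ℕ))) * ∏ j ∈ A.JLam, a j) :=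
  stmt13_general n k b a A sB cC eN hch I L hIc hLc u s hu hs
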